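/- For all nonnegative integers n, \sum_{m=0}^{n} (-1)^{n-m} \binom{n+1}{m} HB_m^{(ν,k)} = \sum_{m=0}^{n} \sum_{l=m}^{n} (-1)^{l-m} \binom{l}{m} \binom{n+1}{l+1} B_m^{(k-1)} H_{n-l}^{(ν)}, where HB_m^{(ν,k)} = HB_m^{(ν,k)}(0), B_m^{(k-1)} = B_m^{(k-1)}(0) are the poly-Bernoulli numbers of index k−1, and H_j^{(ν)} = H_j^{(ν)}(0) are the Hermite numbers of order ν. -/

import Mathlib

open PowerSeries Finset

/-- The power series e^{-t}. -/
noncomputable def expNeg : PowerSeries ℝ := rescale (-1) (PowerSeries.exp ℝ)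

/-- Li_k(1-e^{-t})/(1-e^{-t}) = ∑_{m≥0} (1-e^{-t})^m/(m+1)^k as a formal power series. -/
noncomputable def pbGF (k : ℤ) : PowerSeries ℝ :=
  PowerSeries.mk fun n => ∑ m ∈ Finset.range (n + 1),
    (1 / ((m : ℝ) + 1) ^ k) * PowerSeries.coeff n ((1 - expNeg) ^ m)

/-- The power series e^{-ν t²/2}. -/
noncomputable def hermGF (ν : ℝ) : PowerSeries ℝ :=
  PowerSeries.mk fun n =>
    if Even n then (-ν / 2) ^ (n / 2) / (Nat.factorial (n / 2)) else 0

/-- Hermite and poly-Bernoulli mixed-type polynomials. -/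
noncomputable def HB (ν : ℝ) (k : ℤ) (n : ℕ) (x : ℝ) : ℝ :=
  (Nat.factorial n) *
    PowerSeries.coeff n (hermGF ν * pbGF k * rescale x (PowerSeries.exp ℝ))

/-- Poly-Bernoulli polynomials. -/
noncomputable def pB (k : ℤ) (n : ℕ) (x : ℝ) : ℝ :=
  (Nat.factorial n) * PowerSeries.coeff n (pbGF k * rescale x (PowerSeries.exp ℝ))

/-- Hermite polynomials of order ν. -/
noncomputable def Herm (ν : ℝ) (n : ℕ) (x : ℝ) : ℝ :=
  (Nat.factorial n) * PowerSeries.coeff n (hermGF ν * rescale x (PowerSeries.exp ℝ))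

/-- Stirling numbers of the second kind. -/
def S2 : ℕ → ℕ → ℕ
  | 0, 0 => 1
  | 0, _ + 1 => 0
  | _ + 1, 0 => 0
  | n + 1, m + 1 => (m + 1) * S2 n (m + 1) + S2 n m

/-! With `U = 1 - e^{-t}` one has `Li_k(U)/U · U = ∑_{m ≥ 0} U^{m+1}/(m+1)^k`, and since
`U' = e^{-t}`, differentiating term by term gives `(Li_k(U)/U · U)' = Li_{k-1}(U)/U · e^{-t}`.
In exponential coefficients, `n! [t^n]`, multiplication becomes binomial convolution and
differentiation becomes a shift of the index. Hence the left-hand side is the exponential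
coefficient of `t^{n+1}` in `e^{-νt²/2} · Li_k(U)/U · U`, and expanding this coefficient through
the derivative identity produces the right-hand side. -/

open scoped Nat

section General

variable {R : Type*} [CommSemiring R]

lemma coeff_pow_eq_zero_of_constantCoeff_eq_zero {f : R⟦X⟧} (hf : constantCoeff f = 0)
    {n m : ℕ} (h : n < m) : coeff n (f ^ m) = 0 :=
  X_pow_dvd_iff.mp (pow_dvd_pow_of_dvd (X_dvd_iff.mpr hf) m) n h

lemma coeff_mul_eq_of_trunc_eq {f g : R⟦X⟧} {N n : ℕ} (hfg : trunc N f = trunc N g)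
    (hn : n < N) (h : R⟦X⟧) : coeff n (f * h) = coeff n (g * h) := by
  rw [coeff_mul_eq_coeff_trunc_mul_trunc f h hn, hfg,
    ← coeff_mul_eq_coeff_trunc_mul_trunc g h hn]

lemma derivative_rescale (a : R) (f : R⟦X⟧) :
    d⁄dX R (rescale a f) = C a * rescale a (d⁄dX R f) := by
  ext n
  simp only [coeff_derivative, coeff_rescale, coeff_C_mul]
  ring

noncomputable def egfCoeff (n : ℕ) (f : R⟦X⟧) : R := n ! * coeff n f

lemma egfCoeff_zero (f : R⟦X⟧) : egfCoeff 0 f = constantCoeff f := by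
  simp [egfCoeff]

lemma egfCoeff_mul (f g : R⟦X⟧) (n : ℕ) :
    egfCoeff n (f * g) =
      ∑ i ∈ range (n + 1), n.choose i * egfCoeff i f * egfCoeff (n - i) g := by
  rw [egfCoeff, coeff_mul, Nat.sum_antidiagonal_eq_sum_range_succ_mk, mul_sum]
  refine sum_congr rfl fun i hi => ?_
  rw [egfCoeff, egfCoeff,
    ← Nat.choose_mul_factorial_mul_factorial (Nat.lt_succ_iff.mp (mem_range.mp hi))]
  push_cast
  ring

lemma egfCoeff_succ (f : R⟦X⟧) (n : ℕ) : egfCoeff (n + 1) f = egfCoeff n (d⁄dX R f) := by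
  rw [egfCoeff, egfCoeff, coeff_derivative, Nat.factorial_succ]
  push_cast
  ring

lemma egfCoeff_succ_mul_of_constantCoeff_eq_zero {f : R⟦X⟧} (hf : constantCoeff f = 0)
    (g : R⟦X⟧) (n : ℕ) :
    egfCoeff (n + 1) (f * g) =
      ∑ l ∈ range (n + 1), (n + 1).choose (l + 1) * egfCoeff l (d⁄dX R f) * egfCoeff (n - l) g := by
  rw [egfCoeff_mul, sum_range_succ', egfCoeff_zero f, hf]
  simp [egfCoeff_succ]

end General

lemma egfCoeff_rescale_exp {A : Type*} [CommRing A] [Algebra ℚ A] (a : A) (n : ℕ) :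
    egfCoeff n (rescale a (exp A)) = a ^ n := by
  rw [egfCoeff, coeff_rescale, coeff_exp, ← map_natCast (algebraMap ℚ A), mul_left_comm,
    ← map_mul, mul_one_div_cancel (by positivity), map_one, mul_one]

lemma egfCoeff_expNeg (n : ℕ) : egfCoeff n expNeg = (-1) ^ n :=
  egfCoeff_rescale_exp (-1) n

lemma constantCoeff_one_sub_expNeg : constantCoeff (1 - expNeg) = 0 := by
  have h := egfCoeff_expNeg 0
  rw [egfCoeff_zero] at h
  rw [map_sub, map_one, h, pow_zero, sub_self]

lemma egfCoeff_succ_one_sub_expNeg (n : ℕ) : egfCoeff (n + 1) (1 - expNeg) = (-1) ^ n := by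
  have h := egfCoeff_expNeg (n + 1)
  rw [egfCoeff] at h ⊢
  rw [map_sub, coeff_one, if_neg n.succ_ne_zero, zero_sub, mul_neg, h, pow_succ]
  ring

lemma derivative_one_sub_expNeg : d⁄dX ℝ (1 - expNeg) = expNeg := by
  rw [map_sub, derivative_one, expNeg, derivative_rescale, derivative_exp, map_neg, map_one]
  ring

lemma egfCoeff_mul_expNeg (f : ℝ⟦X⟧) (n : ℕ) :
    egfCoeff n (f * expNeg) =
      ∑ m ∈ range (n + 1), (-1) ^ (n - m) * n.choose m * egfCoeff m f := by
  simp only [egfCoeff_mul, egfCoeff_expNeg]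
  exact sum_congr rfl fun _ _ => by ring

lemma egfCoeff_succ_mul_one_sub_expNeg (f : ℝ⟦X⟧) (n : ℕ) :
    egfCoeff (n + 1) (f * (1 - expNeg)) =
      ∑ m ∈ range (n + 1), (-1) ^ (n - m) * (n + 1).choose m * egfCoeff m f := by
  rw [egfCoeff_mul, sum_range_succ, Nat.sub_self, egfCoeff_zero (1 - expNeg),
    constantCoeff_one_sub_expNeg, mul_zero, add_zero]
  refine sum_congr rfl fun m hm => ?_
  rw [Nat.succ_sub (Nat.lt_succ_iff.mp (mem_range.mp hm)), egfCoeff_succ_one_sub_expNeg]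
  ring

noncomputable def pbPartialSum (k : ℤ) (N : ℕ) : ℝ⟦X⟧ :=
  ∑ m ∈ range N, C (1 / ((m : ℝ) + 1) ^ k) * (1 - expNeg) ^ m

lemma trunc_pbGF (k : ℤ) (N : ℕ) : trunc N (pbGF k) = trunc N (pbPartialSum k N) := by
  ext n
  rw [coeff_trunc, coeff_trunc]
  split_ifs with hn
  · simp only [pbGF, pbPartialSum, coeff_mk, map_sum, coeff_C_mul]
    refine sum_subset (range_subset_range.mpr hn) fun m hmN hmn => ?_
    rw [coeff_pow_eq_zero_of_constantCoeff_eq_zero constantCoeff_one_sub_expNeg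
      (by simpa using hmn), mul_zero]
  · rfl

lemma derivative_pbPartialSum_mul_one_sub_expNeg (k : ℤ) (N : ℕ) :
    d⁄dX ℝ (pbPartialSum k N * (1 - expNeg)) = pbPartialSum (k - 1) N * expNeg := by
  simp only [pbPartialSum, sum_mul, map_sum]
  refine sum_congr rfl fun m _ => ?_
  have hm : (m : ℝ) + 1 ≠ 0 := by positivity
  have hweight : 1 / ((m : ℝ) + 1) ^ k * (m + 1) = 1 / ((m : ℝ) + 1) ^ (k - 1) := by
    rw [zpow_sub_one₀ hm]
    field_simp
  rw [mul_assoc, ← pow_succ, Derivation.leibniz, derivative_C, smul_zero, add_zero,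
    Derivation.leibniz_pow, derivative_one_sub_expNeg, ← hweight, map_mul, map_add, map_natCast, map_one]
  simp only [smul_eq_mul, nsmul_eq_mul, Nat.add_sub_cancel]
  push_cast
  ring

lemma derivative_pbGF_mul_one_sub_expNeg (k : ℤ) :
    d⁄dX ℝ (pbGF k * (1 - expNeg)) = pbGF (k - 1) * expNeg := by
  ext n
  rw [coeff_derivative, coeff_mul_eq_of_trunc_eq (trunc_pbGF k (n + 2)) (by omega),
    ← coeff_derivative, derivative_pbPartialSum_mul_one_sub_expNeg,
    coeff_mul_eq_of_trunc_eq (trunc_pbGF (k - 1) (n + 2)) (by omega)]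

lemma rescale_zero_exp : rescale (0 : ℝ) (exp ℝ) = 1 := by
  simp [rescale_zero]

lemma HB_zero (ν : ℝ) (k : ℤ) (n : ℕ) : HB ν k n 0 = egfCoeff n (hermGF ν * pbGF k) := by
  rw [HB, rescale_zero_exp, mul_one, egfCoeff]

lemma pB_zero (k : ℤ) (n : ℕ) : pB k n 0 = egfCoeff n (pbGF k) := by
  rw [pB, rescale_zero_exp, mul_one, egfCoeff]

lemma Herm_zero (ν : ℝ) (n : ℕ) : Herm ν n 0 = egfCoeff n (hermGF ν) := by
  rw [Herm, rescale_zero_exp, mul_one, egfCoeff]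

theorem HB_numbers_identity_general (ν : ℝ) (k : ℤ) (n : ℕ) :
    ∑ m ∈ Finset.range (n + 1), (-1 : ℝ) ^ (n - m) * ((n + 1).choose m : ℝ) * HB ν k m 0 =
      ∑ m ∈ Finset.range (n + 1), ∑ l ∈ Finset.Icc m n,
        (-1 : ℝ) ^ (l - m) * (l.choose m : ℝ) * ((n + 1).choose (l + 1) : ℝ) *
          pB (k - 1) m 0 * Herm ν (n - l) 0 := by
  have hL : constantCoeff (pbGF k * (1 - expNeg)) = 0 := by
    rw [map_mul, constantCoeff_one_sub_expNeg, mul_zero]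
  calc _ = egfCoeff (n + 1) (pbGF k * (1 - expNeg) * hermGF ν) := by
        rw [show pbGF k * (1 - expNeg) * hermGF ν = hermGF ν * pbGF k * (1 - expNeg) by ring,
          egfCoeff_succ_mul_one_sub_expNeg]
        simp only [HB_zero]
    _ = ∑ l ∈ range (n + 1), (n + 1).choose (l + 1) *
          egfCoeff l (pbGF (k - 1) * expNeg) * egfCoeff (n - l) (hermGF ν) := by
        rw [egfCoeff_succ_mul_of_constantCoeff_eq_zero hL, derivative_pbGF_mul_one_sub_expNeg]
    _ = ∑ l ∈ range (n + 1), ∑ m ∈ range (l + 1),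
          (-1 : ℝ) ^ (l - m) * (l.choose m : ℝ) * ((n + 1).choose (l + 1) : ℝ) *
            pB (k - 1) m 0 * Herm ν (n - l) 0 := by
        simp only [egfCoeff_mul_expNeg, mul_sum, sum_mul, pB_zero, Herm_zero]
        exact sum_congr rfl fun _ _ => sum_congr rfl fun _ _ => by ring
    _ = _ := sum_comm' fun l m => by
        simp only [mem_range, mem_Icc]
        omega

theorem HB_numbers_identity (ν : ℝ) (hν : ν ≠ 0) (k : ℤ) (n : ℕ) :
    ∑ m ∈ Finset.range (n + 1), (-1 : ℝ) ^ (n - m) * ((n + 1).choose m : ℝ) * HB ν k m 0 =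
      ∑ m ∈ Finset.range (n + 1), ∑ l ∈ Finset.Icc m n,
        (-1 : ℝ) ^ (l - m) * (l.choose m : ℝ) * ((n + 1).choose (l + 1) : ℝ) *
          pB (k - 1) m 0 * Herm ν (n - l) 0 :=
  HB_numbers_identity_general ν k n
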